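/- Let P = e_1…e_k be a traversable path given by its arc sequence, and let 1 < i < k. If s̄(i) < k, then either the subpath e_i…e_{s̄(i)+1} is monotone or the subpath e_{i+1}…e_{s̄(i)+1} is monotone (with respect to the zero schedule). Symmetrically, if s̲(i) > 1, then either the subpath e_{s̲(i)−1}…e_i is monotone or the subpath e_{s̲(i)−1}…e_{i−1} is monotone. -/

import Mathlib

open Finset

namespace EV

noncomputable section

/-- Charge after traversing `i` arcs of a path with arc gains `g`, battery capacity `B`,
initial charge `b`. -/
def charge (B b : ℝ) (g : ℕ → ℝ) : ℕ → ℝ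
  | 0 => b
  | i + 1 => min (charge B b g i + g i) B

/-- The traversal of the path with `n` arcs is feasible from initial charge `b`. -/
def Feasible (B b : ℝ) (g : ℕ → ℝ) (n : ℕ) : Prop :=
  ∀ i < n, 0 ≤ charge B b g i + g i

open Classical in
/-- Maximum final charge `α_b(P)` for a path `P` with `n` arc gains `g`,
as an extended real (`⊥ = -∞` if the traversal is infeasible). -/
def alpha (B b : ℝ) (g : ℕ → ℝ) (n : ℕ) : EReal :=
  if Feasible B b g n then ((charge B b g n : ℝ) : EReal) else ⊥

/-- Gain of the `i`-th vertex (0-indexed): the sum of the first `i` arc gains. -/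
def vGain (g : ℕ → ℝ) (i : ℕ) : ℝ := ∑ t ∈ Finset.range i, g t

/-- `P` is traversable: `α_B(P) ≥ 0`, i.e. feasible from a full battery. -/
def Traversable (B : ℝ) (g : ℕ → ℝ) (n : ℕ) : Prop := Feasible B B g n

/-- `C` is a charge drop schedule for a path with `n` arcs (vertices `0,…,n`):
no drop at the first vertex, all drops nonnegative. -/
def Schedule (C : ℕ → ℝ) (n : ℕ) : Prop := C 0 = 0 ∧ ∀ i ≤ n, 0 ≤ C i

/-- Gain of vertex `i` with respect to the charge drop schedule `C`. -/
def cGain (g C : ℕ → ℝ) (i : ℕ) : ℝ := vGain g i - ∑ t ∈ Finset.range (i + 1), C t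

/-- `P` (with `n` arcs) is ascending with respect to the schedule `C`. -/
def AscendingC (B : ℝ) (g C : ℕ → ℝ) (n : ℕ) : Prop :=
  Traversable B g n ∧ ∀ i ≤ n, 0 ≤ cGain g C i ∧ cGain g C i ≤ cGain g C n

/-- `P` (with `n` arcs) is descending with respect to the schedule `C`. -/
def DescendingC (B : ℝ) (g C : ℕ → ℝ) (n : ℕ) : Prop :=
  Traversable B g n ∧ ∀ i ≤ n, cGain g C n ≤ cGain g C i ∧ cGain g C i ≤ 0

/-- `P` is monotone with respect to the schedule `C`. -/
def MonotoneC (B : ℝ) (g C : ℕ → ℝ) (n : ℕ) : Prop :=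
  AscendingC B g C n ∨ DescendingC B g C n

/-- Ascending with respect to the zero schedule. -/
def Ascending (B : ℝ) (g : ℕ → ℝ) (n : ℕ) : Prop := AscendingC B g (fun _ => 0) n

/-- Descending with respect to the zero schedule. -/
def Descending (B : ℝ) (g : ℕ → ℝ) (n : ℕ) : Prop := DescendingC B g (fun _ => 0) n

/-- Monotone with respect to the zero schedule. -/
def MonotonePath (B : ℝ) (g : ℕ → ℝ) (n : ℕ) : Prop := Ascending B g n ∨ Descending B g n

/-- The contiguous subpath whose arcs start at arc index `a`. -/
def SubPath (g : ℕ → ℝ) (a : ℕ) : ℕ → ℝ := fun t => g (a + t)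

/-- Restriction of a charge drop schedule to the subpath starting at vertex `a`:
no drop at the subpath's first vertex. -/
def restrict (C : ℕ → ℝ) (a : ℕ) : ℕ → ℝ := fun t => if t = 0 then 0 else C (a + t)

/-- First-arc-bounded with respect to a schedule `C` (no drop at the second vertex,
and all vertex gains lie between the gains of the first two vertices). -/
def FirstArcBoundedC (g C : ℕ → ℝ) (n : ℕ) : Prop :=
  C 1 = 0 ∧
    ((0 ≤ g 0 ∧ ∀ i ≤ n, 0 ≤ cGain g C i ∧ cGain g C i ≤ g 0) ∨
     (g 0 ≤ 0 ∧ ∀ i ≤ n, g 0 ≤ cGain g C i ∧ cGain g C i ≤ 0))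

/-- Last-arc-bounded with respect to a schedule `C` (no drops at the last two vertices,
and all vertex gains lie between the gains of the last two vertices). -/
def LastArcBoundedC (g C : ℕ → ℝ) (n : ℕ) : Prop :=
  C (n - 1) = 0 ∧ C n = 0 ∧
    ((0 ≤ g (n - 1) ∧ ∀ i ≤ n, cGain g C (n - 1) ≤ cGain g C i ∧ cGain g C i ≤ cGain g C n) ∨
     (g (n - 1) < 0 ∧ ∀ i ≤ n, cGain g C n ≤ cGain g C i ∧ cGain g C i ≤ cGain g C (n - 1)))

/-- First-arc-bounded (zero schedule). -/
def FirstArcBounded (g : ℕ → ℝ) (n : ℕ) : Prop := FirstArcBoundedC g (fun _ => 0) n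

/-- Last-arc-bounded (zero schedule). -/
def LastArcBounded (g : ℕ → ℝ) (n : ℕ) : Prop := LastArcBoundedC g (fun _ => 0) n

/-- Arc-bounded: first- or last-arc-bounded. -/
def ArcBounded (g : ℕ → ℝ) (n : ℕ) : Prop := FirstArcBounded g n ∨ LastArcBounded g n

/-- A funnel: arc-bounded and containing no monotone subpath of 2 or 3 consecutive arcs. -/
def Funnel (B : ℝ) (g : ℕ → ℝ) (n : ℕ) : Prop :=
  ArcBounded g n ∧ ∀ a m, (m = 2 ∨ m = 3) → a + m ≤ n → ¬ MonotonePath B (SubPath g a) m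

/-- `j = s̄(i)`: the maximal index `j ≥ i` (among arcs of a path with `n` arcs) such that
the subpath of arcs `i,…,j` is first-arc-bounded. -/
def IsSbar (g : ℕ → ℝ) (n i j : ℕ) : Prop :=
  i ≤ j ∧ j < n ∧ FirstArcBounded (SubPath g i) (j - i + 1) ∧
    ∀ j', i ≤ j' → j' < n → FirstArcBounded (SubPath g i) (j' - i + 1) → j' ≤ j

/-- `j = s̲(i)`: the minimal index `j ≤ i` such that the subpath of arcs `j,…,i`
is last-arc-bounded. -/
def IsSlow (g : ℕ → ℝ) (n i j : ℕ) : Prop :=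
  j ≤ i ∧ i < n ∧ LastArcBounded (SubPath g j) (i - j + 1) ∧
    ∀ j', j' ≤ i → LastArcBounded (SubPath g j') (i - j' + 1) → j ≤ j'

/-- Arc gains of the walk around a cycle with `m` arc gains `g`, starting at vertex `a`. -/
def cyc (g : ℕ → ℝ) (m a : ℕ) : ℕ → ℝ := fun t => g ((a + t) % m)

/-- A walk of length `ℓ` from `x` to `y` in the directed graph with arc relation `A`. -/
def IsWalk {V : Type*} (A : V → V → Prop) (w : ℕ → V) (ℓ : ℕ) (x y : V) : Prop :=
  w 0 = x ∧ w ℓ = y ∧ ∀ t < ℓ, A (w t) (w (t + 1))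

/-- The sequence of arc gains induced by a walk `w` in a graph with gain function `g`. -/
def walkGains {V : Type*} (g : V → V → ℝ) (w : ℕ → V) : ℕ → ℝ :=
  fun t => g (w t) (w (t + 1))

lemma charge_le_cap (B : ℝ) (g : ℕ → ℝ) : ∀ i, charge B B g i ≤ B
  | 0 => le_refl B
  | _ + 1 => min_le_right _ _

lemma charge_subPath_ge (B : ℝ) (g : ℕ → ℝ) (a : ℕ) :
    ∀ t, charge B B g (a + t) ≤ charge B B (SubPath g a) t := by
  intro t
  induction t with
  | zero => exact charge_le_cap B g a
  | succ t ih =>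
      show min (charge B B g (a + t) + g (a + t)) B ≤
        min (charge B B (SubPath g a) t + SubPath g a t) B
      exact min_le_min (add_le_add ih le_rfl) le_rfl

lemma traversable_subPath {B : ℝ} {g : ℕ → ℝ} {n : ℕ} (h : Traversable B g n)
    {a m : ℕ} (hle : a + m ≤ n) : Traversable B (SubPath g a) m := by
  intro t ht
  have h1 := h (a + t) (by omega)
  have h2 := charge_subPath_ge B g a t
  show 0 ≤ charge B B (SubPath g a) t + g (a + t)
  linarith

lemma vGain_subPath (g : ℕ → ℝ) (a : ℕ) :
    ∀ t, vGain (SubPath g a) t = vGain g (a + t) - vGain g a := by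
  intro t
  induction t with
  | zero => simp [vGain]
  | succ t ih =>
      have h1 : vGain (SubPath g a) (t + 1) = vGain (SubPath g a) t + g (a + t) :=
        Finset.sum_range_succ _ _
      have h2 : vGain g (a + t + 1) = vGain g (a + t) + g (a + t) :=
        Finset.sum_range_succ _ _
      show vGain (SubPath g a) (t + 1) = vGain g (a + t + 1) - vGain g a
      rw [h1, h2, ih]; ring

lemma vGain_succ (g : ℕ → ℝ) (t : ℕ) : vGain g (t + 1) = vGain g t + g t :=
  Finset.sum_range_succ _ _

lemma cGain_zeroSched (g : ℕ → ℝ) (t : ℕ) : cGain g (fun _ => 0) t = vGain g t := by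
  simp [cGain]

lemma monotone_of_asc {B : ℝ} {g' : ℕ → ℝ} {m : ℕ} (ht : Traversable B g' m)
    (h : ∀ t ≤ m, 0 ≤ vGain g' t ∧ vGain g' t ≤ vGain g' m) : MonotonePath B g' m :=
  Or.inl ⟨ht, fun t htm => by
    rw [cGain_zeroSched, cGain_zeroSched]; exact h t htm⟩

lemma monotone_of_desc {B : ℝ} {g' : ℕ → ℝ} {m : ℕ} (ht : Traversable B g' m)
    (h : ∀ t ≤ m, vGain g' m ≤ vGain g' t ∧ vGain g' t ≤ 0) : MonotonePath B g' m :=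
  Or.inr ⟨ht, fun t htm => by
    rw [cGain_zeroSched, cGain_zeroSched]; exact h t htm⟩

lemma firstArcBounded_iff (g' : ℕ → ℝ) (m : ℕ) : FirstArcBounded g' m ↔
    ((0 ≤ g' 0 ∧ ∀ t ≤ m, 0 ≤ vGain g' t ∧ vGain g' t ≤ g' 0) ∨
     (g' 0 ≤ 0 ∧ ∀ t ≤ m, g' 0 ≤ vGain g' t ∧ vGain g' t ≤ 0)) := by
  simp [FirstArcBounded, FirstArcBoundedC, cGain_zeroSched]

lemma lastArcBounded_iff (g' : ℕ → ℝ) (m : ℕ) : LastArcBounded g' m ↔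
    ((0 ≤ g' (m - 1) ∧ ∀ t ≤ m, vGain g' (m - 1) ≤ vGain g' t ∧ vGain g' t ≤ vGain g' m) ∨
     (g' (m - 1) < 0 ∧ ∀ t ≤ m, vGain g' m ≤ vGain g' t ∧ vGain g' t ≤ vGain g' (m - 1))) := by
  simp [LastArcBounded, LastArcBoundedC, cGain_zeroSched]

/-- Let `P = e_0 … e_{n-1}` be a traversable path and `1 ≤ i`, `i + 1 < n`.
If `s̄(i) < n - 1` then `e_i … e_{s̄(i)+1}` or `e_{i+1} … e_{s̄(i)+1}` is monotone;
if `s̲(i) > 0` then `e_{s̲(i)-1} … e_i` or `e_{s̲(i)-1} … e_{i-1}` is monotone. -/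
theorem extend_arcBounded_to_monotone (B : ℝ) (hB : 0 < B) (g : ℕ → ℝ) (n : ℕ)
    (hP : Traversable B g n) (i : ℕ) (h1 : 1 ≤ i) (h2 : i + 1 < n) :
    (∀ j, IsSbar g n i j → j + 1 < n →
      MonotonePath B (SubPath g i) (j + 2 - i) ∨
      MonotonePath B (SubPath g (i + 1)) (j + 1 - i)) ∧
    (∀ j, IsSlow g n i j → 1 ≤ j →
      MonotonePath B (SubPath g (j - 1)) (i - j + 2) ∨
      MonotonePath B (SubPath g (j - 1)) (i - j + 1)) := by
  constructor
  · -- first half: s̄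
    rintro j ⟨hij, hjn, hFAB, hmax⟩ hjn1
    set m := j - i + 1 with hm
    have him : i + m = j + 1 := by omega
    have hnot : ¬ FirstArcBounded (SubPath g i) (m + 1) := by
      intro h
      have h3 : j + 1 - i + 1 = m + 1 := by omega
      have := hmax (j + 1) (by omega) hjn1 (by rw [h3]; exact h)
      omega
    rw [firstArcBounded_iff] at hFAB hnot
    set W : ℕ → ℝ := vGain (SubPath g i) with hW
    have he1 : j + 2 - i = m + 1 := by omega
    have he2 : j + 1 - i = m := by omega
    have hg0 : (SubPath g i) 0 = g i := by simp [SubPath]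
    have hW1 : W 1 = g i := by
      rw [hW, vGain_succ]; simp [vGain, SubPath]
    have htrav1 : Traversable B (SubPath g i) (m + 1) :=
      traversable_subPath hP (by omega)
    have htrav2 : Traversable B (SubPath g (i + 1)) m :=
      traversable_subPath hP (by omega)
    have hshift : ∀ t, vGain (SubPath g (i + 1)) t = W (t + 1) - W 1 := by
      intro t
      rw [hW, vGain_subPath, vGain_subPath, vGain_subPath]
      have : i + 1 + t = i + (t + 1) := by omega
      rw [this]; ring
    rw [he1, he2]
    rcases hFAB with ⟨hnn, hA⟩ | ⟨hnp, hA⟩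
    · rw [hg0] at hnn hA
      have hfail : W (m + 1) < 0 ∨ g i < W (m + 1) := by
        by_contra hc
        push_neg at hc
        refine hnot (Or.inl ⟨by rw [hg0]; exact hnn, fun t htm => ?_⟩)
        rw [hg0]
        by_cases htm' : t ≤ m
        · exact hA t htm'
        · have : t = m + 1 := by omega
          subst this
          exact ⟨hc.1, hc.2⟩
      rcases hfail with hlt | hgt
      · -- W(m+1) < 0 : drop first arc, descending
        right
        refine monotone_of_desc htrav2 fun t htm => ?_
        rw [hshift, hshift, hW1]
        by_cases htm' : t + 1 ≤ m
        · have h1 := hA (t + 1) htm'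
          have h2 := hA 1 (by omega)
          constructor <;> linarith
        · have : t = m := by omega
          subst this
          constructor <;> linarith
      · -- g i < W(m+1) : whole extension ascending
        left
        refine monotone_of_asc htrav1 fun t htm => ?_
        by_cases htm' : t ≤ m
        · have h1 := hA t htm'
          constructor <;> linarith
        · have : t = m + 1 := by omega
          subst this
          constructor <;> linarith
    · rw [hg0] at hnp hA
      have hfail : 0 < W (m + 1) ∨ W (m + 1) < g i := by
        by_contra hc
        push_neg at hc
        refine hnot (Or.inr ⟨by rw [hg0]; exact hnp, fun t htm => ?_⟩)
        rw [hg0]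
        by_cases htm' : t ≤ m
        · exact hA t htm'
        · have : t = m + 1 := by omega
          subst this
          exact ⟨hc.2, hc.1⟩
      rcases hfail with hgt | hlt
      · -- 0 < W(m+1) : drop first arc, ascending
        right
        refine monotone_of_asc htrav2 fun t htm => ?_
        rw [hshift, hshift, hW1]
        by_cases htm' : t + 1 ≤ m
        · have h1 := hA (t + 1) htm'
          have h2 := hA 1 (by omega)
          constructor <;> linarith
        · have : t = m := by omega
          subst this
          constructor <;> linarith
      · -- W(m+1) < g i : whole extension descending
        left
        refine monotone_of_desc htrav1 fun t htm => ?_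
        by_cases htm' : t ≤ m
        · have h1 := hA t htm'
          constructor <;> linarith
        · have : t = m + 1 := by omega
          subst this
          constructor <;> linarith
  · -- second half: s̲
    rintro j ⟨hji, hin, hLAB, hmin⟩ hj1
    set m := i - j + 1 with hm
    have him : j + m = i + 1 := by omega
    have hnot : ¬ LastArcBounded (SubPath g (j - 1)) (m + 1) := by
      intro h
      have h3 : i - (j - 1) + 1 = m + 1 := by omega
      have := hmin (j - 1) (by omega) (by rw [h3]; exact h)
      omega
    rw [lastArcBounded_iff] at hLAB hnot
    set W : ℕ → ℝ := vGain (SubPath g j) with hW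
    set H : ℕ → ℝ := vGain (SubPath g (j - 1)) with hH
    have he1 : i - j + 2 = m + 1 := by omega
    have he2 : i - j + 1 = m := by omega
    have hgm : (SubPath g j) (m - 1) = g i := by
      show g (j + (m - 1)) = g i
      congr 1; omega
    have hgm' : (SubPath g (j - 1)) (m + 1 - 1) = g i := by
      show g (j - 1 + (m + 1 - 1)) = g i
      congr 1; omega
    have hH0 : H 0 = 0 := by simp [hH, vGain]
    have hHrel : ∀ t, H (t + 1) = W t + g (j - 1) := by
      intro t
      rw [hH, hW, vGain_subPath, vGain_subPath]
      have h4 : j - 1 + (t + 1) = j + t := by omega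
      have h5 : vGain g j = vGain g (j - 1) + g (j - 1) := by
        have := vGain_succ g (j - 1)
        rw [show j - 1 + 1 = j by omega] at this
        rw [this]
      rw [h4, h5]; ring
    have hWm : W m = W (m - 1) + g i := by
      have := vGain_succ (SubPath g j) (m - 1)
      rw [show m - 1 + 1 = m by omega, hgm] at this
      rw [hW, this]
    have hHm : H m = W (m - 1) + g (j - 1) := by
      have := hHrel (m - 1)
      rwa [show m - 1 + 1 = m by omega] at this
    have htrav1 : Traversable B (SubPath g (j - 1)) (m + 1) :=
      traversable_subPath hP (by omega)
    have htrav2 : Traversable B (SubPath g (j - 1)) m :=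
      traversable_subPath hP (by omega)
    rw [he1]
    rcases hLAB with ⟨hnn, hA⟩ | ⟨hnp, hA⟩
    · rw [hgm] at hnn
      have hfail : 0 < H m ∨ H (m + 1) < 0 := by
        by_contra hc
        push_neg at hc
        refine hnot (Or.inl ⟨by rw [hgm']; exact hnn, fun t htm => ?_⟩)
        rw [show m + 1 - 1 = m by omega]
        rcases Nat.eq_zero_or_pos t with rfl | hpos
        · rw [hH0]
          exact ⟨hc.1, hc.2⟩
        · obtain ⟨s, rfl⟩ : ∃ s, t = s + 1 := ⟨t - 1, by omega⟩
          have h1 := hA s (by omega)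
          rw [hHm, hHrel s, hHrel m, hWm]
          constructor <;> linarith [h1.1, h1.2]
      rcases hfail with hgt | hlt
      · -- 0 < H m = g(j-1)+W(m-1): whole extension ascending
        left
        refine monotone_of_asc htrav1 fun t htm => ?_
        rw [← hH, hHrel m, hWm]
        rcases Nat.eq_zero_or_pos t with rfl | hpos
        · rw [hH0, hHm] at *
          constructor <;> linarith
        · obtain ⟨s, rfl⟩ : ∃ s, t = s + 1 := ⟨t - 1, by omega⟩
          have h1 := hA s (by omega)
          rw [hHrel s, hHm] at *
          constructor <;> linarith
      · -- H(m+1) < 0 : drop last arc, descending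
        right
        refine monotone_of_desc htrav2 fun t htm => ?_
        rw [← hH]
        have hlt' : W m + g (j - 1) < 0 := by rw [hHrel m] at hlt; linarith
        rcases Nat.eq_zero_or_pos t with rfl | hpos
        · rw [hH0, hHm]
          have h1 := hA (m - 1) (by omega)
          constructor <;> linarith [h1.2]
        · obtain ⟨s, rfl⟩ : ∃ s, t = s + 1 := ⟨t - 1, by omega⟩
          have h1 := hA s (by omega)
          rw [hHrel s, hHm]
          constructor <;> linarith [h1.1, h1.2]
    · rw [hgm] at hnp
      have hfail : 0 < H (m + 1) ∨ H m < 0 := by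
        by_contra hc
        push_neg at hc
        refine hnot (Or.inr ⟨by rw [hgm']; exact hnp, fun t htm => ?_⟩)
        rw [show m + 1 - 1 = m by omega]
        rcases Nat.eq_zero_or_pos t with rfl | hpos
        · rw [hH0]
          exact ⟨hc.1, hc.2⟩
        · obtain ⟨s, rfl⟩ : ∃ s, t = s + 1 := ⟨t - 1, by omega⟩
          have h1 := hA s (by omega)
          rw [hHm, hHrel s, hHrel m, hWm]
          constructor <;> linarith [h1.1, h1.2]
      rcases hfail with hgt | hlt
      · -- 0 < H(m+1) = W m + g(j-1) : drop last arc, ascending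
        right
        refine monotone_of_asc htrav2 fun t htm => ?_
        rw [← hH]
        have hgt' : W m + g (j - 1) > 0 := by rw [hHrel m] at hgt; linarith
        rcases Nat.eq_zero_or_pos t with rfl | hpos
        · rw [hH0, hHm]
          have h1 := hA (m - 1) (by omega)
          constructor <;> linarith [h1.2]
        · obtain ⟨s, rfl⟩ : ∃ s, t = s + 1 := ⟨t - 1, by omega⟩
          have h1 := hA s (by omega)
          rw [hHrel s, hHm]
          constructor <;> linarith [h1.1, h1.2]
      · -- H m < 0 : whole extension descending
        left
        refine monotone_of_desc htrav1 fun t htm => ?_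
        rw [← hH, hHrel m, hWm]
        rcases Nat.eq_zero_or_pos t with rfl | hpos
        · rw [hH0, hHm] at *
          constructor <;> linarith
        · obtain ⟨s, rfl⟩ : ∃ s, t = s + 1 := ⟨t - 1, by omega⟩
          have h1 := hA s (by omega)
          rw [hHrel s, hHm] at *
          constructor <;> linarith

end

end EV
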